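/- Let p be a prime and n ≥ 1. Let s₁,…,s_{n+1} be integers with 0 ≤ s_ν < p for all ν = 1,…,n+1. If ∑_{ν=1}^{n} s_ν · φ(p^{ν-1}) = s_{n+1} · p^{n-1} (where φ is Euler's totient function and φ(p^0)=1), then s₁ = s₂ = … = s_{n+1}. -/

import Mathlib

/-! Since `φ(p^ν) = p^ν - p^(ν-1)` for `ν ≥ 1`, summation by parts turns the hypothesis into
`∑_{ν=1}^{n} (s_ν - s_{ν+1}) p^(ν-1) = 0`. The differences satisfy `|s_ν - s_{ν+1}| < p`, and a
base-`p` expansion of `0` with such balanced digits has all digits zero: reducing mod `p` kills the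
lowest digit, and one divides by `p` and repeats. -/

theorem eq_zero_of_sum_mul_pow_eq_zero {b : ℤ} {d : ℕ → ℤ} {n : ℕ}
    (hd : ∀ i < n, |d i| < b) (h : ∑ i ∈ Finset.range n, d i * b ^ i = 0) :
    ∀ i < n, d i = 0 := by
  induction n generalizing d with
  | zero => simp
  | succ n ih =>
    rw [Finset.sum_range_succ'] at h
    have hsplit : d 0 + b * ∑ i ∈ Finset.range n, d (i + 1) * b ^ i = 0 := by
      rw [Finset.mul_sum, ← h, pow_zero, mul_one, add_comm]
      congr 1
      exact Finset.sum_congr rfl fun i _ => by ring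
    have hd0 : d 0 = 0 :=
      Int.eq_zero_of_abs_lt_dvd ⟨-∑ i ∈ Finset.range n, d (i + 1) * b ^ i, by linarith⟩
        (hd 0 n.succ_pos)
    have hb : b ≠ 0 := (lt_of_le_of_lt (abs_nonneg _) (hd 0 n.succ_pos)).ne'
    have htail : ∑ i ∈ Finset.range n, d (i + 1) * b ^ i = 0 := by
      simpa [hd0, hb] using hsplit
    have ih' := ih (d := fun i => d (i + 1)) (fun i hi => hd (i + 1) (by omega)) htail
    rintro (_ | i) hi
    · exact hd0
    · exact ih' i (by omega)

theorem sum_Icc_mul_totient_prime_pow {p : ℕ} (hp : p.Prime) (s : ℕ → ℤ) {n : ℕ} (hn : 1 ≤ n) :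
    ∑ ν ∈ Finset.Icc 1 n, s ν * (Nat.totient (p ^ (ν - 1)) : ℤ)
      = s (n + 1) * (p : ℤ) ^ (n - 1)
        + ∑ i ∈ Finset.range n, (s (i + 1) - s (i + 2)) * (p : ℤ) ^ i := by
  induction n, hn using Nat.le_induction with
  | base => simp
  | succ n hn ih =>
    obtain ⟨k, rfl⟩ : ∃ k, n = k + 1 := ⟨n - 1, by omega⟩
    rw [Finset.sum_Icc_succ_top (by omega), ih, Finset.sum_range_succ _ (k + 1)]
    simp only [Nat.add_sub_cancel]
    rw [Nat.totient_prime_pow_succ hp]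
    push_cast [Nat.cast_sub hp.one_le]
    ring

/-- If `∑_{ν=1}^{n} s_ν φ(p^{ν-1}) = s_{n+1} p^{n-1}` with digits `0 ≤ s_ν < p`,
then all `s_ν` are equal. -/
theorem stmt_0 (p n : ℕ) (hp : p.Prime) (hn : 1 ≤ n) (s : ℕ → ℤ)
    (hs : ∀ ν ∈ Finset.Icc 1 (n + 1), 0 ≤ s ν ∧ s ν < (p : ℤ))
    (hsum : ∑ ν ∈ Finset.Icc 1 n, s ν * (Nat.totient (p ^ (ν - 1)) : ℤ)
      = s (n + 1) * (p : ℤ) ^ (n - 1)) :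
    ∀ i ∈ Finset.Icc 1 (n + 1), ∀ j ∈ Finset.Icc 1 (n + 1), s i = s j := by
  have hdiff : ∑ i ∈ Finset.range n, (s (i + 1) - s (i + 2)) * (p : ℤ) ^ i = 0 := by
    linarith [sum_Icc_mul_totient_prime_pow hp s hn]
  have hsmall : ∀ i < n, |s (i + 1) - s (i + 2)| < p := by
    intro i hi
    obtain ⟨h₁, h₁'⟩ := hs (i + 1) (Finset.mem_Icc.2 ⟨by omega, by omega⟩)
    obtain ⟨h₂, h₂'⟩ := hs (i + 2) (Finset.mem_Icc.2 ⟨by omega, by omega⟩)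
    exact abs_sub_lt_iff.2 ⟨by linarith, by linarith⟩
  have hstep := eq_zero_of_sum_mul_pow_eq_zero hsmall hdiff
  have hconst : ∀ i, 1 ≤ i → i ≤ n + 1 → s i = s 1 := by
    intro i hi₁
    induction i, hi₁ using Nat.le_induction with
    | base => exact fun _ => rfl
    | succ i hi ih =>
      intro hi₂
      rw [← ih (by omega)]
      obtain ⟨k, rfl⟩ : ∃ k, i = k + 1 := ⟨i - 1, by omega⟩
      linarith [hstep k (by omega)]
  intro i hi j hj
  rw [Finset.mem_Icc] at hi hj
  rw [hconst i hi.1 hi.2, hconst j hj.1 hj.2]
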